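/- Let n > m ≥ 2 and let H be a maximal clique in the Johnson graph J_n(m,m-1) with intersection set S = ⋂_{v ∈ H} ν(v). Then |S| = 0 or |S| = m−1. -/

import Mathlib

/-- Vertices of the Johnson graph `J_n(m, m-1)`: the `m`-element subsets of `{1, …, n}`
(modelled as `Fin n`).  The label set `ν(v)` of a vertex `v` is `v.val`. -/
abbrev JohnsonVertex (n m : ℕ) := {A : Finset (Fin n) // A.card = m}

/-- The Johnson graph `J_n(m, m-1)`: two distinct `m`-subsets are adjacent iff they
intersect in exactly `m - 1` elements. -/
def johnsonGraph (n m : ℕ) : SimpleGraph (JohnsonVertex n m) where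
  Adj v w := v ≠ w ∧ (v.1 ∩ w.1).card = m - 1
  symm := ⟨fun v w h => ⟨h.1.symm, by rw [Finset.inter_comm]; exact h.2⟩⟩
  loopless := ⟨fun v h => h.1 rfl⟩

/-!
Let `A ≠ B` be adjacent members of the maximal clique `H`, so `K = A ∩ B` has `m - 1` elements
and `T = A ∪ B` has `m + 1`. A common neighbour of `A` and `B` either contains `K` or is
`T.erase x` for some `x ∈ K`. If every member of `H` contains `K`, the intersection is `K`.
Otherwise `H` contains some `C = T.erase x`; a member containing `K` is adjacent to `C` and
this forces it into `T`, so all of `H` lies in `T`. Any two distinct `m`-subsets of `T` are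
adjacent, so by maximality, for each `y ∈ T` the vertex `T.erase y` belongs to `H`, and the
intersection is empty.
-/

namespace SimpleGraph

variable {V : Type*} {G : SimpleGraph V} {H : Finset V}

lemma mem_of_maximal_isClique [DecidableEq V]
    (hH : Maximal (fun s : Finset V => G.IsClique ↑s) H) {v : V}
    (hv : ∀ w ∈ H, v ≠ w → G.Adj v w) : v ∈ H := by
  have hclique : G.IsClique ↑(insert v H) := by
    rw [Finset.coe_insert]
    exact hH.1.insert hv
  exact hH.2 hclique (Finset.subset_insert v H) (Finset.mem_insert_self v H)

lemma exists_adj_of_maximal_isClique [Nonempty V]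
    (hH : Maximal (fun s : Finset V => G.IsClique ↑s) H) (hG : ∀ v, ∃ w, G.Adj v w) :
    ∃ a ∈ H, ∃ b ∈ H, G.Adj a b := by
  classical
  obtain ⟨a, ha⟩ : H.Nonempty := by
    obtain ⟨v⟩ := ‹Nonempty V›
    refine Finset.nonempty_iff_ne_empty.2 fun hempty => ?_
    simpa [hempty] using mem_of_maximal_isClique (v := v) hH (by simp [hempty])
  by_contra! hnone
  obtain ⟨b, hab⟩ := hG a
  have hb : b ∈ H := mem_of_maximal_isClique hH fun w hw hbw => by
    obtain rfl : w = a := by_contra fun hwa => hnone w hw a ha (hH.1 hw ha hwa)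
    exact hab.symm
  exact hnone a ha b hb hab

end SimpleGraph

namespace Finset

variable {α : Type*} [DecidableEq α] {A B D T : Finset α} {x : α} {m : ℕ}

lemma erase_subset_of_card_inter (hxA : x ∈ A) (hxD : x ∉ D)
    (h : A.card - 1 ≤ (D ∩ A).card) : A.erase x ⊆ D := by
  have hinter : D ∩ A = A.erase x := by
    refine eq_of_subset_of_card_le (fun y hy => ?_) (by rwa [card_erase_of_mem hxA])
    rw [mem_inter] at hy
    exact mem_erase.2 ⟨fun hyx => hxD (hyx ▸ hy.1), hy.2⟩
  exact hinter ▸ inter_subset_left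

lemma eq_erase_union_of_notMem (hxA : x ∈ A) (hxB : x ∈ B) (hxD : x ∉ D)
    (hDA : A.card - 1 ≤ (D ∩ A).card) (hDB : B.card - 1 ≤ (D ∩ B).card)
    (hcard : D.card < (A ∪ B).card) : D = (A ∪ B).erase x := by
  have hsub : (A ∪ B).erase x ⊆ D := by
    rw [erase_union_distrib]
    exact union_subset (erase_subset_of_card_inter hxA hxD hDA)
      (erase_subset_of_card_inter hxB hxD hDB)
  refine (eq_of_subset_of_card_le hsub ?_).symm
  rw [card_erase_of_mem (mem_union_left B hxA)]
  omega

lemma subset_of_card_inter_erase (hxD : x ∈ D) (hxT : x ∈ T)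
    (h : (D ∩ T.erase x).card = D.card - 1) : D ⊆ T := by
  rw [inter_erase, card_erase_of_mem (mem_inter.2 ⟨hxD, hxT⟩)] at h
  have hpos : 0 < (D ∩ T).card := card_pos.2 ⟨x, mem_inter.2 ⟨hxD, hxT⟩⟩
  exact inter_eq_left.1 (eq_of_subset_of_card_le inter_subset_left (by omega))

lemma card_inter_of_subset_of_card_eq_succ {E : Finset α} (hT : T.card = m + 1)
    (hDT : D ⊆ T) (hET : E ⊆ T) (hD : D.card = m) (hE : E.card = m) (hDE : D ≠ E) :
    (D ∩ E).card = m - 1 := by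
  have hunion : (D ∪ E).card ≤ m + 1 := hT ▸ card_le_card (union_subset hDT hET)
  have hlt : m < (D ∪ E).card := by
    refine hD ▸ card_lt_card (ssubset_iff_subset_ne.2 ⟨subset_union_left, ?_⟩)
    intro hDU
    exact hDE (eq_of_subset_of_card_le (hDU ▸ subset_union_right) (by omega)).symm
  have := card_union_add_card_inter D E
  omega

end Finset

lemma JohnsonVertex.nonempty {n m : ℕ} (h : m ≤ n) : Nonempty (JohnsonVertex n m) := by
  obtain ⟨A, -, hA⟩ := Finset.exists_subset_card_eq (s := (Finset.univ : Finset (Fin n)))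
    (by simpa using h)
  exact ⟨⟨A, hA⟩⟩

namespace johnsonGraph

variable {n m : ℕ}

lemma exists_adj (hm : 0 < m) (hn : m < n) (A : JohnsonVertex n m) :
    ∃ B, (johnsonGraph n m).Adj A B := by
  obtain ⟨a, ha⟩ := Finset.card_pos.1 (by rwa [A.2] : 0 < A.1.card)
  obtain ⟨b, hb⟩ : ∃ b, b ∉ A.1 := by
    by_contra! hall
    have := Finset.card_le_card (fun b _ => hall b : (Finset.univ : Finset (Fin n)) ⊆ A.1)
    simp only [Finset.card_univ, Fintype.card_fin, A.2] at this
    omega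
  have hbA : b ∉ A.1.erase a := fun h => hb (Finset.mem_of_mem_erase h)
  have hinter : A.1 ∩ insert b (A.1.erase a) = A.1.erase a := by
    rw [Finset.inter_insert_of_notMem hb, Finset.inter_eq_right.2 (Finset.erase_subset a A.1)]
  refine ⟨⟨insert b (A.1.erase a), ?_⟩, fun hAB => hb ?_, ?_⟩
  · rw [Finset.card_insert_of_notMem hbA, Finset.card_erase_of_mem ha, A.2]
    omega
  · rw [hAB]
    exact Finset.mem_insert_self b _
  · rw [hinter, Finset.card_erase_of_mem ha, A.2]

lemma card_union_of_adj {A B : JohnsonVertex n m} (h : (johnsonGraph n m).Adj A B) :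
    (A.1 ∪ B.1).card = m + 1 := by
  have hm : m ≠ 0 := by
    rintro rfl
    exact h.1 (Subtype.ext ((Finset.card_eq_zero.1 A.2).trans (Finset.card_eq_zero.1 B.2).symm))
  have := Finset.card_union_add_card_inter A.1 B.1
  rw [A.2, B.2, h.2] at this
  omega

lemma eq_erase_union {A B D : JohnsonVertex n m} (hAB : (johnsonGraph n m).Adj A B)
    (hDA : (johnsonGraph n m).Adj D A) (hDB : (johnsonGraph n m).Adj D B)
    {x : Fin n} (hx : x ∈ A.1 ∩ B.1) (hxD : x ∉ D.1) : D.1 = (A.1 ∪ B.1).erase x := by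
  rw [Finset.mem_inter] at hx
  refine Finset.eq_erase_union_of_notMem hx.1 hx.2 hxD ?_ ?_ ?_
  · rw [A.2, hDA.2]
  · rw [B.2, hDB.2]
  · rw [card_union_of_adj hAB, D.2]
    omega

lemma subset_union_of_isClique {H : Finset (JohnsonVertex n m)}
    (hH : (johnsonGraph n m).IsClique ↑H) {A B C : JohnsonVertex n m} (hA : A ∈ H) (hB : B ∈ H)
    (hC : C ∈ H) (hAB : (johnsonGraph n m).Adj A B) (hKC : ¬ A.1 ∩ B.1 ⊆ C.1) :
    ∀ v ∈ H, v.1 ⊆ A.1 ∪ B.1 := by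
  obtain ⟨x, hx, hxC⟩ := Finset.not_subset.1 hKC
  have hne {v w : JohnsonVertex n m} {y : Fin n} (hy : y ∈ w.1) (hyv : y ∉ v.1) : v ≠ w :=
    fun h => hyv (h ▸ hy)
  have hCeq : C.1 = (A.1 ∪ B.1).erase x :=
    eq_erase_union hAB (hH hC hA (hne (Finset.mem_of_mem_inter_left hx) hxC))
      (hH hC hB (hne (Finset.mem_of_mem_inter_right hx) hxC)) hx hxC
  intro v hv
  by_cases hKv : A.1 ∩ B.1 ⊆ v.1
  · have hvC := hH hv hC (hne (hKv hx) hxC).symm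
    refine Finset.subset_of_card_inter_erase (hKv hx) (Finset.mem_union_left _ ?_) ?_
    · exact Finset.mem_of_mem_inter_left hx
    · rw [← hCeq, hvC.2, v.2]
  · obtain ⟨y, hy, hyv⟩ := Finset.not_subset.1 hKv
    rw [eq_erase_union hAB
      (hH hv hA (hne (Finset.mem_of_mem_inter_left hy) hyv))
      (hH hv hB (hne (Finset.mem_of_mem_inter_right hy) hyv)) hy hyv]
    exact Finset.erase_subset y _

lemma exists_notMem_of_maximal_isClique {H : Finset (JohnsonVertex n m)}
    (hH : Maximal (fun s : Finset (JohnsonVertex n m) => (johnsonGraph n m).IsClique ↑s) H)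
    {T : Finset (Fin n)} (hT : T.card = m + 1) (hHT : ∀ v ∈ H, v.1 ⊆ T) {y : Fin n} (hy : y ∈ T) :
    ∃ v ∈ H, y ∉ v.1 := by
  have hE : (T.erase y).card = m := by rw [Finset.card_erase_of_mem hy, hT, Nat.add_sub_cancel]
  refine ⟨⟨T.erase y, hE⟩, SimpleGraph.mem_of_maximal_isClique hH fun w hw hEw => ?_,
    Finset.notMem_erase y T⟩
  exact ⟨hEw, Finset.card_inter_of_subset_of_card_eq_succ hT (Finset.erase_subset y T)
    (hHT w hw) hE w.2 fun h => hEw (Subtype.ext h)⟩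

end johnsonGraph

/-- For `n > m ≥ 2`, the intersection set of a maximal clique of `J_n(m,m-1)`
has cardinality `0` or `m - 1`. -/
theorem stmt5 (n m : ℕ) (hm : 2 ≤ m) (hn : m < n)
    (H : Finset (JohnsonVertex n m))
    (hH : Maximal (fun s : Finset (JohnsonVertex n m) => (johnsonGraph n m).IsClique ↑s) H)
    (S : Finset (Fin n)) (hS : S = H.inf Subtype.val) :
    S.card = 0 ∨ S.card = m - 1 := by
  have := JohnsonVertex.nonempty hn.le
  obtain ⟨A, hA, B, hB, hAB⟩ :=
    SimpleGraph.exists_adj_of_maximal_isClique hH (johnsonGraph.exists_adj (by omega) hn)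
  have hSv : ∀ v ∈ H, S ⊆ v.1 := fun v hv => hS ▸ Finset.inf_le hv
  by_cases hK : ∀ v ∈ H, A.1 ∩ B.1 ⊆ v.1
  · right
    have hSK : S = A.1 ∩ B.1 :=
      le_antisymm (Finset.subset_inter (hSv A hA) (hSv B hB)) (hS ▸ Finset.le_inf hK)
    rw [hSK, hAB.2]
  · left
    obtain ⟨C, hC, hKC⟩ := not_forall₂.1 hK
    have hHT := johnsonGraph.subset_union_of_isClique hH.1 hA hB hC hAB hKC
    refine Finset.card_eq_zero.2 (Finset.eq_empty_of_forall_notMem fun y hy => ?_)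
    obtain ⟨v, hv, hyv⟩ := johnsonGraph.exists_notMem_of_maximal_isClique hH
      (johnsonGraph.card_union_of_adj hAB) hHT (Finset.mem_union_left _ (hSv A hA hy))
    exact hyv (hSv v hv hy)
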